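/- Deviation bound for Kinf of the prior-shifted empirical distribution at the true mean: Let m ≥ 1, b > 0, and let f : {0,…,m} → [0,b] satisfy f(0) = 0 and f(m) = b. Let X_1,…,X_n be i.i.d. samples from p ∈ Δ_m with pf < b, let α⁰ ∈ ℝ_{≥0}^{m+1} with n₀ = Σ_{j=0}^m α⁰_j, and define the shifted empirical distribution p̄_n(j) = (α⁰_j + ν_j)/(n + n₀) where ν_j = #{i ≤ n : X_i = j}. Then for every u ≥ 0: P( (n + n₀)·Kinf(p̄_n, pf, f) ≥ n·u + n₀·log( b/(b − pf) ) ) ≤ e·(2n + 1)·e^{−n u}. -/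

import Mathlib

open Real Set

noncomputable section

/-- Kullback–Leibler divergence between finitely supported `p, q` (for `p ≪ q`). -/
def klReal {m : ℕ} (p q : Fin (m + 1) → ℝ) : ℝ :=
  ∑ i, if p i = 0 then 0 else p i * Real.log (p i / q i)

/-- `Kinf(p, μ, f) = inf { KL(p,q) : q ∈ Δ_m, qf ≥ μ }`. -/
def Kinf {m : ℕ} (p : Fin (m + 1) → ℝ) (μ : ℝ) (f : Fin (m + 1) → ℝ) : ℝ :=
  sInf {x | ∃ q ∈ stdSimplex ℝ (Fin (m + 1)),
    (∀ i, q i = 0 → p i = 0) ∧ μ ≤ ∑ i, f i * q i ∧ x = klReal p q}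

open MeasureTheory ProbabilityTheory
open scoped ENNReal

/-! Put `μ = pf` and `d = (f - μ)/(b - μ) ≤ 1`, so that `E_p[1 - θ d(X)] = 1` for every `θ`.
Exponential tilting `q = w / (1 - θ d)` shows
`Kinf(w, μ, f) ≤ max_{θ ∈ [0,1]} E_w log (1 - θ d)`. Applied to the shifted empirical
distribution, the pseudo-counts `α⁰` contribute at most `n₀ log (b/(b - μ))`, so on the event
some `θ` has `∏ᵢ (1 - θ d(Xᵢ)) ≥ e^{nu}`. Moving `θ` to a grid point `k/(2n)`, `k ≤ 2n`, costs
a factor `(1 + 1/n)^n ≤ e`, and Markov's inequality for each of the `2n + 1` mean-one products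
`∏ᵢ (1 - (k/2n) d(Xᵢ))` gives the bound. -/

section KinfBasics

variable {m : ℕ} {w q f : Fin (m + 1) → ℝ} {μ : ℝ}

lemma neg_le_klReal_term {x y : ℝ} (hx : 0 ≤ x) (hy : 0 ≤ y) :
    -y ≤ if x = 0 then 0 else x * log (x / y) := by
  split_ifs with hx0
  · linarith
  rcases hy.eq_or_lt with rfl | hy
  · simp
  have hlog := one_sub_inv_le_log_of_pos (div_pos (hx.lt_of_ne' hx0) hy)
  rw [inv_div] at hlog
  have : x * (1 - y / x) = x - y := by field_simp
  nlinarith [mul_le_mul_of_nonneg_left hlog hx]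

lemma neg_one_le_klReal (hw : ∀ j, 0 ≤ w j) (hq : q ∈ stdSimplex ℝ (Fin (m + 1))) :
    -1 ≤ klReal w q := by
  calc -1 = ∑ j, -q j := by rw [Finset.sum_neg_distrib, hq.2]
    _ ≤ klReal w q := Finset.sum_le_sum fun j _ => neg_le_klReal_term (hw j) (hq.1 j)

lemma Kinf_le_sum_mul_log (hw : ∀ j, 0 ≤ w j) (hq : q ∈ stdSimplex ℝ (Fin (m + 1)))
    (hqf : μ ≤ ∑ i, f i * q i) {r : Fin (m + 1) → ℝ}
    (hr : ∀ j, w j ≠ 0 → q j ≠ 0 ∧ w j / q j = r j) :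
    Kinf w μ f ≤ ∑ j, w j * log (r j) := by
  have hkl : klReal w q = ∑ j, w j * log (r j) := by
    refine Finset.sum_congr rfl fun j _ => ?_
    by_cases hwj : w j = 0
    · simp [hwj]
    · rw [if_neg hwj, (hr j hwj).2]
  rw [← hkl]
  refine csInf_le ⟨-1, ?_⟩ ⟨q, hq, fun j hqj => ?_, hqf, rfl⟩
  · rintro _ ⟨q', hq', -, -, rfl⟩
    exact neg_one_le_klReal hw hq'
  · by_contra hwj
    exact (hr j hwj).1 hqj

end KinfBasics

lemma one_sub_mul_pos_of_left_lt_one {θ c : ℝ} (h0 : 0 ≤ θ) (h1 : θ < 1) (hc : c ≤ 1) :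
    0 < 1 - θ * c := by
  nlinarith [mul_nonneg h0 (sub_nonneg.2 hc)]

lemma one_sub_mul_nonneg_of_mem_Icc {θ c : ℝ} (hθ : θ ∈ Icc (0 : ℝ) 1) (hc : c ≤ 1) :
    0 ≤ 1 - θ * c := by
  nlinarith [mul_le_mul_of_nonneg_left hc hθ.1, hθ.2]

lemma one_sub_mul_pos_of_right_lt_one {θ c : ℝ} (h0 : 0 ≤ θ) (h1 : θ ≤ 1) (hc : c < 1) :
    0 < 1 - θ * c := by
  rcases le_or_gt c 0 with hc0 | hc0
  · nlinarith [mul_nonneg h0 (neg_nonneg.2 hc0)]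
  · nlinarith [mul_nonneg (sub_nonneg.2 h1) hc0.le]

section Tilt

variable {m : ℕ} {w d : Fin (m + 1) → ℝ}

lemma sum_div_one_sub_mul (hw : ∑ j, w j = 1) {θ : ℝ}
    (hθ : ∀ j, w j ≠ 0 → 1 - θ * d j ≠ 0) :
    ∑ j, w j / (1 - θ * d j) = 1 + θ * ∑ j, w j * d j / (1 - θ * d j) := by
  have hterm : ∀ j, w j / (1 - θ * d j) = w j + θ * (w j * d j / (1 - θ * d j)) := by
    intro j
    by_cases hwj : w j = 0
    · simp [hwj]
    · field_simp [hθ j hwj]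
      ring
  rw [Finset.sum_congr rfl fun j _ => hterm j, Finset.sum_add_distrib, hw, Finset.mul_sum]

lemma continuousOn_sum_mul_div_one_sub {s : Set ℝ}
    (hs : ∀ θ ∈ s, ∀ j, w j ≠ 0 → 1 - θ * d j ≠ 0) :
    ContinuousOn (fun θ => ∑ j, w j * d j / (1 - θ * d j)) s := by
  refine continuousOn_finsetSum _ fun j _ => ?_
  by_cases hwj : w j = 0
  · simp only [hwj, zero_mul, zero_div]
    exact continuousOn_const
  · exact continuousOn_const.div (by fun_prop) fun θ hθ => hs θ hθ j hwj

lemma tilt_mem_stdSimplex (hw : w ∈ stdSimplex ℝ (Fin (m + 1))) {θ : ℝ}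
    (hθ : ∀ j, 0 < 1 - θ * d j) (hroot : ∑ j, w j * d j / (1 - θ * d j) = 0) :
    (fun j => w j / (1 - θ * d j)) ∈ stdSimplex ℝ (Fin (m + 1)) :=
  ⟨fun j => div_nonneg (hw.1 j) (hθ j).le, by
    rw [sum_div_one_sub_mul hw.2 fun j _ => (hθ j).ne', hroot, mul_zero, add_zero]⟩

lemma lt_one_of_tilt_neg (hw : w ∈ stdSimplex ℝ (Fin (m + 1))) (hd : ∀ j, d j ≤ 1)
    (hneg : ∀ θ ∈ Ico (0 : ℝ) 1, ∑ j, w j * d j / (1 - θ * d j) < 0) {j : Fin (m + 1)}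
    (hwj : w j ≠ 0) : d j < 1 := by
  by_contra hdj
  replace hdj : d j = 1 := le_antisymm (hd j) (not_lt.1 hdj)
  have hwj_pos : 0 < w j := (hw.1 j).lt_of_ne' hwj
  have hwj_le : w j ≤ 1 := hw.2 ▸ Finset.single_le_sum (fun i _ => hw.1 i) (Finset.mem_univ j)
  set θ := 1 - w j / 2 with hθ_def
  have hθ : θ ∈ Ico (0 : ℝ) 1 := ⟨by linarith, by linarith⟩
  have hden : ∀ i, 0 < 1 - θ * d i := fun i =>
    one_sub_mul_pos_of_left_lt_one hθ.1 hθ.2 (hd i)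
  -- the total mass `∑ w / (1 - θ d)` is `< 1`, but its `j`-th term alone is `2`
  have hZ := sum_div_one_sub_mul hw.2 (θ := θ) fun i _ => (hden i).ne'
  have hterm : w j / (1 - θ * d j) = 2 := by
    rw [hdj, mul_one, hθ_def, sub_sub_cancel]
    field_simp
  have := Finset.single_le_sum (fun i _ => div_nonneg (hw.1 i) (hden i).le) (Finset.mem_univ j)
  nlinarith [mul_neg_of_pos_of_neg (by linarith : 0 < θ) (hneg θ hθ)]

lemma tilt_at_one_nonpos (hw : w ∈ stdSimplex ℝ (Fin (m + 1))) (hd : ∀ j, d j ≤ 1)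
    (hneg : ∀ θ ∈ Ico (0 : ℝ) 1, ∑ j, w j * d j / (1 - θ * d j) < 0) :
    ∑ j, w j * d j / (1 - d j) ≤ 0 := by
  have hcont : ContinuousOn (fun θ => ∑ j, w j * d j / (1 - θ * d j)) (closure (Ico 0 1)) := by
    rw [closure_Ico zero_ne_one]
    exact continuousOn_sum_mul_div_one_sub fun θ hθ j hwj =>
      (one_sub_mul_pos_of_right_lt_one hθ.1 hθ.2 (lt_one_of_tilt_neg hw hd hneg hwj)).ne'
  have h := le_on_closure (fun θ hθ => (hneg θ hθ).le) hcont continuousOn_const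
    (by rw [closure_Ico zero_ne_one]; exact right_mem_Icc.2 zero_le_one)
  simpa using h

/-- The dual optimiser of `Kinf`: `θ = 0` if `∑ w d ≥ 0`, else a root `θ ∈ [0, 1)` of
`θ ↦ ∑ w d / (1 - θ d)` if there is one, else `θ = 1` with the missing mass on the atom
where `d = 1`. -/
theorem exists_tilt (hw : w ∈ stdSimplex ℝ (Fin (m + 1))) (hd : ∀ j, d j ≤ 1)
    (hlast : d (Fin.last m) = 1) :
    ∃ θ ∈ Icc (0 : ℝ) 1, ∃ q ∈ stdSimplex ℝ (Fin (m + 1)), 0 ≤ ∑ j, d j * q j ∧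
      ∀ j, w j ≠ 0 → 0 < 1 - θ * d j ∧ q j = w j / (1 - θ * d j) := by
  set φ : ℝ → ℝ := fun θ => ∑ j, w j * d j / (1 - θ * d j) with hφ
  by_cases h0 : 0 ≤ φ 0
  · refine ⟨0, left_mem_Icc.2 zero_le_one, w, hw, ?_, fun j _ => by simp⟩
    simpa [hφ, mul_comm] using h0
  by_cases hroot : ∃ θ₀ ∈ Ico (0 : ℝ) 1, 0 ≤ φ θ₀
  · obtain ⟨θ₀, hθ₀, hφθ₀⟩ := hroot
    have hden : ∀ θ ∈ Icc 0 θ₀, ∀ j, 0 < 1 - θ * d j := fun θ hθ j =>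
      one_sub_mul_pos_of_left_lt_one hθ.1 (hθ.2.trans_lt hθ₀.2) (hd j)
    obtain ⟨θ, hθ, hφθ⟩ := intermediate_value_Icc hθ₀.1
      (continuousOn_sum_mul_div_one_sub fun θ hθ j _ => (hden θ hθ j).ne')
      ⟨(not_le.1 h0).le, hφθ₀⟩
    refine ⟨θ, ⟨hθ.1, hθ.2.trans hθ₀.2.le⟩, _, tilt_mem_stdSimplex hw (hden θ hθ) hφθ, ?_,
      fun j _ => ⟨hden θ hθ j, rfl⟩⟩
    exact ((Finset.sum_congr rfl fun j _ => by ring).trans hφθ).ge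
  push Not at hroot
  have hlt : ∀ j, w j ≠ 0 → d j < 1 := fun j hwj => lt_one_of_tilt_neg hw hd hroot hwj
  have hZ := sum_div_one_sub_mul hw.2 (d := d) (θ := 1) fun j hwj => by
    linarith [hlt j hwj]
  simp only [one_mul] at hZ
  have hφ1 := tilt_at_one_nonpos hw hd hroot
  set S := ∑ j, w j / (1 - d j)
  refine ⟨1, right_mem_Icc.2 zero_le_one,
    fun j => w j / (1 - d j) + if j = Fin.last m then 1 - S else 0, ⟨fun j => ?_, ?_⟩, ?_,
    fun j hwj => ?_⟩
  · have := div_nonneg (hw.1 j) (sub_nonneg.2 (hd j))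
    dsimp only
    split_ifs <;> linarith
  · rw [Finset.sum_add_distrib, Finset.sum_ite_eq' Finset.univ, if_pos (Finset.mem_univ _)]
    ring
  · simp only [mul_add, mul_ite, mul_zero, Finset.sum_add_distrib,
      Finset.sum_ite_eq' Finset.univ, if_pos (Finset.mem_univ _), hlast]
    have hdq : ∑ j, d j * (w j / (1 - d j)) = ∑ j, w j * d j / (1 - d j) :=
      Finset.sum_congr rfl fun j _ => by ring
    rw [hdq]
    linarith
  · have hj : j ≠ Fin.last m := fun h => (hlt j hwj).ne (h ▸ hlast)
    exact ⟨by linarith [hlt j hwj], by simp [hj]⟩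

end Tilt

/-- The easy half of the Honda–Takemura duality
`Kinf(w, μ, f) = max_{θ ∈ [0,1]} ∑ w log (1 - θ (f - μ)/(b - μ))`. -/
theorem Kinf_le_sum_mul_log_one_sub {m : ℕ} {w f : Fin (m + 1) → ℝ} {b μ : ℝ} (hμb : μ < b)
    (hf : ∀ j, f j ≤ b) (hfm : f (Fin.last m) = b) (hw : w ∈ stdSimplex ℝ (Fin (m + 1))) :
    ∃ θ ∈ Icc (0 : ℝ) 1, (∀ j, w j ≠ 0 → 0 < 1 - θ * ((f j - μ) / (b - μ))) ∧
      Kinf w μ f ≤ ∑ j, w j * log (1 - θ * ((f j - μ) / (b - μ))) := by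
  have hbμ : 0 < b - μ := sub_pos.2 hμb
  obtain ⟨θ, hθ, q, hq, hdq, htilt⟩ := exists_tilt (d := fun j => (f j - μ) / (b - μ)) hw
    (fun j => (div_le_one hbμ).2 (by linarith [hf j])) (by simp [hfm, hbμ.ne'])
  refine ⟨θ, hθ, fun j hwj => (htilt j hwj).1,
    Kinf_le_sum_mul_log hw.1 hq ?_ fun j hwj => ?_⟩
  · have hfq : ∀ j, f j * q j = μ * q j + (b - μ) * ((f j - μ) / (b - μ) * q j) :=
      fun j => by field_simp; ring
    rw [Finset.sum_congr rfl fun j _ => hfq j, Finset.sum_add_distrib, ← Finset.mul_sum,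
      ← Finset.mul_sum, hq.2]
    nlinarith
  · obtain ⟨hpos, hqj⟩ := htilt j hwj
    rw [hqj]
    exact ⟨div_ne_zero hwj hpos.ne', div_div_cancel₀ hwj⟩

lemma log_one_sub_mul_le {b μ y θ : ℝ} (hμ0 : 0 ≤ μ) (hμb : μ < b) (hy : 0 ≤ y)
    (hθ : θ ∈ Icc (0 : ℝ) 1) (hpos : 0 < 1 - θ * ((y - μ) / (b - μ))) :
    log (1 - θ * ((y - μ) / (b - μ))) ≤ log (b / (b - μ)) := by
  have hbμ : 0 < b - μ := sub_pos.2 hμb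
  refine log_le_log hpos ?_
  rw [mul_div_assoc', one_sub_div hbμ.ne', div_le_div_iff_of_pos_right hbμ]
  nlinarith [mul_nonneg hθ.1 hy, mul_nonneg (sub_nonneg.2 hθ.2) hμ0]

section Sample

variable {m n : ℕ} (x : Fin n → Fin (m + 1))

lemma sum_card_fiber_mul (g : Fin (m + 1) → ℝ) :
    ∑ j, ((Finset.univ.filter fun i => x i = j).card : ℝ) * g j = ∑ i, g (x i) := by
  rw [← Finset.sum_fiberwise' Finset.univ x g]
  simp only [Finset.sum_const, nsmul_eq_mul]

variable {α0 : Fin (m + 1) → ℝ} {n0 : ℝ}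

lemma shifted_empirical_mem_stdSimplex (hα0 : ∀ j, 0 ≤ α0 j) (hn0 : n0 = ∑ j, α0 j)
    (hN : 0 < n + n0) :
    (fun j => (α0 j + (Finset.univ.filter fun i => x i = j).card) / (n + n0))
      ∈ stdSimplex ℝ (Fin (m + 1)) := by
  refine ⟨fun j => div_nonneg (add_nonneg (hα0 j) (Nat.cast_nonneg _)) hN.le, ?_⟩
  have hcard := sum_card_fiber_mul x fun _ => 1
  simp only [mul_one, Finset.sum_const, Finset.card_univ, Fintype.card_fin, nsmul_eq_mul]
    at hcard
  rw [← Finset.sum_div, Finset.sum_add_distrib, hcard, ← hn0, add_comm, div_self hN.ne']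

/-- The pseudo-counts `α0` contribute at most `n0 log (b / (b - μ))` to `(n + n0) Kinf`; the
sample contributes `log ∏ (1 - θ d(x i))`. -/
theorem exists_exp_le_prod_of_le_Kinf {f : Fin (m + 1) → ℝ} {b μ t : ℝ} (hμ0 : 0 ≤ μ)
    (hμb : μ < b) (hf : ∀ j, f j ∈ Icc 0 b) (hfm : f (Fin.last m) = b)
    (hα0 : ∀ j, 0 ≤ α0 j) (hn0 : n0 = ∑ j, α0 j) (hN : 0 < n + n0)
    (h : t + n0 * log (b / (b - μ)) ≤ (n + n0) *
      Kinf (fun j => (α0 j + (Finset.univ.filter fun i => x i = j).card) / (n + n0)) μ f) :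
    ∃ θ ∈ Icc (0 : ℝ) 1, exp t ≤ ∏ i, (1 - θ * ((f (x i) - μ) / (b - μ))) := by
  set ν : Fin (m + 1) → ℝ := fun j => (Finset.univ.filter fun i => x i = j).card
  obtain ⟨θ, hθ, hpos, hK⟩ := Kinf_le_sum_mul_log_one_sub hμb (fun j => (hf j).2) hfm
    (shifted_empirical_mem_stdSimplex x hα0 hn0 hN)
  set g : Fin (m + 1) → ℝ := fun j => 1 - θ * ((f j - μ) / (b - μ))
  have hw : ∀ j, α0 j + ν j ≠ 0 → 0 < g j := fun j hj => hpos j (div_ne_zero hj hN.ne')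
  have hsample : ∀ i, 0 < g (x i) := fun i => hw _ (ne_of_gt (add_pos_of_nonneg_of_pos
    (hα0 _) (Nat.cast_pos.2 (Finset.card_pos.2 ⟨i, by simp⟩))))
  have hsplit : (n + n0) * ∑ j, (α0 j + ν j) / (n + n0) * log (g j)
      = ∑ j, α0 j * log (g j) + ∑ i, log (g (x i)) := by
    have hcount : ∑ j, ν j * log (g j) = ∑ i, log (g (x i)) := sum_card_fiber_mul x _
    rw [← hcount, ← Finset.sum_add_distrib, Finset.mul_sum]
    exact Finset.sum_congr rfl fun j _ => by field_simp
  have hprior : ∑ j, α0 j * log (g j) ≤ n0 * log (b / (b - μ)) := by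
    rw [hn0, Finset.sum_mul]
    refine Finset.sum_le_sum fun j _ => ?_
    rcases (hα0 j).eq_or_lt with hj | hj
    · simp [← hj]
    · exact mul_le_mul_of_nonneg_left (log_one_sub_mul_le hμ0 hμb (hf j).1 hθ
        (hw j (add_pos_of_pos_of_nonneg hj (Nat.cast_nonneg _)).ne')) hj.le
  refine ⟨θ, hθ, ?_⟩
  rw [← exp_log (Finset.prod_pos fun i _ => hsample i), exp_le_exp,
    log_prod fun i _ => (hsample i).ne']
  nlinarith [mul_le_mul_of_nonneg_left hK hN.le]

end Sample

section Grid

variable {c θ θ' δ : ℝ}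

lemma one_sub_mul_le_of_le_of_le_half (hc : c ≤ 1) (h0 : 0 ≤ θ) (hθθ' : θ ≤ θ')
    (hθ' : θ' ≤ 1 / 2) (hδ : θ' - θ ≤ δ) :
    1 - θ * c ≤ (1 + 2 * δ) * (1 - θ' * c) := by
  rcases le_or_gt c 0 with hc0 | hc0
  · nlinarith [mul_nonneg (sub_nonneg.2 hθθ') (neg_nonneg.2 hc0),
      mul_nonneg (mul_nonneg (by linarith : 0 ≤ δ) (h0.trans hθθ')) (neg_nonneg.2 hc0)]
  · nlinarith [mul_le_mul_of_nonneg_right hδ hc0.le, mul_nonneg (by linarith : 0 ≤ δ) hc0.le,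
      mul_le_mul_of_nonneg_left (mul_le_mul_of_nonneg_left hc (h0.trans hθθ'))
        (by linarith : 0 ≤ δ)]

lemma one_sub_mul_le_of_half_le_of_le (hc : c ≤ 1) (hθ : θ ≤ 1) (hθ' : 1 / 2 ≤ θ')
    (hθ'θ : θ' ≤ θ) (hδ : θ - θ' ≤ δ) :
    1 - θ * c ≤ (1 + 2 * δ) * (1 - θ' * c) := by
  rcases le_or_gt 0 c with hc0 | hc0
  · nlinarith [mul_nonneg (sub_nonneg.2 hθ'θ) hc0,
      mul_le_mul_of_nonneg_left hc (by linarith : 0 ≤ θ'),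
      mul_nonneg (by linarith : 0 ≤ δ) (by nlinarith : 0 ≤ 1 - θ' * c)]
  · nlinarith [mul_nonneg (by linarith : 0 ≤ δ - (θ - θ')) (neg_nonneg.2 hc0.le),
      mul_nonneg (mul_nonneg (by linarith : 0 ≤ δ) (by linarith : (0 : ℝ) ≤ θ' - 1 / 2))
        (neg_nonneg.2 hc0.le)]

lemma prod_le_exp_one_mul_prod {n : ℕ} {a b : Fin n → ℝ} (ha : ∀ i, 0 ≤ a i)
    (hab : ∀ i, a i ≤ (1 + (n : ℝ)⁻¹) * b i) : ∏ i, a i ≤ exp 1 * ∏ i, b i := by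
  have hb : ∀ i, 0 ≤ b i := fun i =>
    nonneg_of_mul_nonneg_right ((ha i).trans (hab i)) (by positivity)
  calc ∏ i, a i ≤ ∏ i, (1 + (n : ℝ)⁻¹) * b i :=
        Finset.prod_le_prod (fun i _ => ha i) fun i _ => hab i
    _ = (1 + (n : ℝ)⁻¹) ^ n * ∏ i, b i := by
        rw [Finset.prod_mul_distrib, Finset.prod_const, Finset.card_univ, Fintype.card_fin]
    _ ≤ exp 1 * ∏ i, b i :=
        mul_le_mul_of_nonneg_right one_add_inv_pow_le_exp
          (Finset.prod_nonneg fun i _ => hb i)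

/-- `θ` is rounded towards `1/2`: then for `c ≥ 0` below `1/2` the factor `1 - θ' c` is at least
`1/2`, and for `c < 0` above `1/2` it is at least `-c/2`, which absorbs the rounding error. -/
lemma exists_grid_one_sub_mul_le {n : ℕ} (hn : 0 < n) {θ : ℝ} (hθ : θ ∈ Icc (0 : ℝ) 1) :
    ∃ k ≤ 2 * n, ∀ c ≤ (1 : ℝ), 1 - θ * c ≤ (1 + (n : ℝ)⁻¹) * (1 - k / (2 * n) * c) := by
  have h2n : (0 : ℝ) < 2 * n := by positivity
  have hδ : 1 + (n : ℝ)⁻¹ = 1 + 2 * (2 * (n : ℝ))⁻¹ := by field_simp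
  have hθn : 0 ≤ 2 * n * θ := mul_nonneg h2n.le hθ.1
  rcases le_or_gt θ (1 / 2) with hθ2 | hθ2
  · have hk : ⌈2 * n * θ⌉₊ ≤ n := Nat.ceil_le.2 (by nlinarith)
    refine ⟨⌈2 * n * θ⌉₊, by omega, fun c hc => hδ ▸ one_sub_mul_le_of_le_of_le_half hc hθ.1
      ?_ ?_ ?_⟩
    · rw [le_div_iff₀ h2n]
      linarith [Nat.le_ceil (2 * n * θ)]
    · rw [div_le_iff₀ h2n]
      linarith [(Nat.cast_le (α := ℝ)).2 hk]
    · rw [div_sub' h2n.ne', div_le_iff₀ h2n, inv_mul_cancel₀ h2n.ne']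
      linarith [Nat.ceil_lt_add_one hθn]
  · have hk : ⌊2 * n * θ⌋₊ ≤ 2 * n := Nat.floor_le_of_le (by push_cast; nlinarith [hθ.2])
    refine ⟨⌊2 * n * θ⌋₊, hk, fun c hc => hδ ▸ one_sub_mul_le_of_half_le_of_le hc hθ.2
      ?_ ?_ ?_⟩
    · rw [le_div_iff₀ h2n]
      have : n ≤ ⌊2 * n * θ⌋₊ := Nat.le_floor (by nlinarith)
      linarith [(Nat.cast_le (α := ℝ)).2 this]
    · rw [div_le_iff₀ h2n]
      linarith [Nat.floor_le hθn]
    · rw [sub_div' h2n.ne', div_le_iff₀ h2n, inv_mul_cancel₀ h2n.ne']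
      linarith [Nat.lt_floor_add_one (2 * n * θ)]

theorem exists_grid_prod_le {n : ℕ} (hn : 0 < n) {c : Fin n → ℝ} (hc : ∀ i, c i ≤ 1) {θ : ℝ}
    (hθ : θ ∈ Icc (0 : ℝ) 1) :
    ∃ k ≤ 2 * n, ∏ i, (1 - θ * c i) ≤ exp 1 * ∏ i, (1 - k / (2 * n) * c i) := by
  obtain ⟨k, hk, hstep⟩ := exists_grid_one_sub_mul_le hn hθ
  exact ⟨k, hk, prod_le_exp_one_mul_prod (fun i => one_sub_mul_nonneg_of_mem_Icc hθ (hc i))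
    fun i => hstep _ (hc i)⟩

end Grid

section Markov

variable {m n : ℕ} {Ω : Type*} [MeasurableSpace Ω] {P : Measure Ω} {p : Fin (m + 1) → ℝ}

lemma lintegral_comp_eq_sum {Y : Ω → Fin (m + 1)} (hY : Measurable Y)
    (hdist : Measure.map Y P = ∑ j, ENNReal.ofReal (p j) • Measure.dirac j)
    (g : Fin (m + 1) → ℝ≥0∞) :
    ∫⁻ ω, g (Y ω) ∂P = ∑ j, ENNReal.ofReal (p j) * g j := by
  rw [← lintegral_map Measurable.of_discrete hY, hdist, lintegral_finsetSum_measure]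
  simp only [lintegral_smul_measure, lintegral_dirac, smul_eq_mul]

theorem measure_exp_le_prod_le {X : Fin n → Ω → Fin (m + 1)} (hXmeas : ∀ i, Measurable (X i))
    (hindep : iIndepFun X P)
    (hdist : ∀ i, Measure.map (X i) P = ∑ j, ENNReal.ofReal (p j) • Measure.dirac j)
    (hp : ∀ j, 0 ≤ p j) {g : Fin (m + 1) → ℝ} (hg : ∀ j, 0 ≤ g j) (hpg : ∑ j, p j * g j = 1)
    (t : ℝ) :
    P {ω | exp t ≤ ∏ i, g (X i ω)} ≤ ENNReal.ofReal (exp (-t)) := by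
  have hmeas : ∀ i, Measurable fun ω => ENNReal.ofReal (g (X i ω)) := fun i =>
    (Measurable.of_discrete (f := fun j => ENNReal.ofReal (g j))).comp (hXmeas i)
  have hG : ∫⁻ ω, ∏ i, ENNReal.ofReal (g (X i ω)) ∂P = 1 := by
    refine (lintegral_prod_eq_prod_lintegral_of_indepFun Finset.univ _
      (hindep.comp (fun _ j => ENNReal.ofReal (g j)) fun _ => Measurable.of_discrete)
      hmeas).trans (Finset.prod_eq_one fun i _ => ?_)
    rw [Function.comp_def,
      lintegral_comp_eq_sum (hXmeas i) (hdist i) fun j => ENNReal.ofReal (g j)]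
    simp_rw [← ENNReal.ofReal_mul (hp _)]
    rw [← ENNReal.ofReal_sum_of_nonneg fun j _ => mul_nonneg (hp j) (hg j), hpg,
      ENNReal.ofReal_one]
  calc P {ω | exp t ≤ ∏ i, g (X i ω)}
        ≤ P {ω | ENNReal.ofReal (exp t) ≤ ∏ i, ENNReal.ofReal (g (X i ω))} :=
        measure_mono fun ω (hω : exp t ≤ _) => by
          rw [Set.mem_ofPred_eq, ← ENNReal.ofReal_prod_of_nonneg fun i _ => hg (X i ω)]
          exact ENNReal.ofReal_le_ofReal hω
    _ ≤ (∫⁻ ω, ∏ i, ENNReal.ofReal (g (X i ω)) ∂P) / ENNReal.ofReal (exp t) :=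
        meas_ge_le_lintegral_div (Finset.measurable_prod _ fun i _ => hmeas i).aemeasurable
          (by simp [exp_pos]) ENNReal.ofReal_ne_top
    _ = ENNReal.ofReal (exp (-t)) := by
        rw [hG, one_div, ← ENNReal.ofReal_inv_of_pos (exp_pos t), exp_neg]

end Markov

lemma sum_mul_one_sub_mul_centered {m : ℕ} {p f : Fin (m + 1) → ℝ} (hp : ∑ j, p j = 1)
    (b θ : ℝ) :
    ∑ j, p j * (1 - θ * ((f j - ∑ ℓ, f ℓ * p ℓ) / (b - ∑ ℓ, f ℓ * p ℓ))) = 1 := by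
  set μ := ∑ ℓ, f ℓ * p ℓ with hμ
  have hterm : ∀ j, p j * (1 - θ * ((f j - μ) / (b - μ)))
      = p j - θ / (b - μ) * (f j * p j - μ * p j) := fun j => by ring
  simp only [hterm, Finset.sum_sub_distrib, ← Finset.mul_sum, ← hμ, hp, mul_one, sub_self,
    mul_zero, sub_zero]

theorem kinf_shifted_empirical_deviation_general
    (m : ℕ) (b : ℝ)
    (f : Fin (m + 1) → ℝ) (hf : ∀ i, f i ∈ Set.Icc (0 : ℝ) b)
    (hfm : f (Fin.last m) = b)
    (n : ℕ) (hn : 1 ≤ n)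
    {Ω : Type*} [MeasurableSpace Ω] (P : Measure Ω)
    (X : Fin n → Ω → Fin (m + 1)) (hXmeas : ∀ i, Measurable (X i))
    (hindep : iIndepFun X P)
    (p : Fin (m + 1) → ℝ) (hp : p ∈ stdSimplex ℝ (Fin (m + 1)))
    (hpf : ∑ ℓ, f ℓ * p ℓ < b)
    (hdist : ∀ i, Measure.map (X i) P = ∑ j, ENNReal.ofReal (p j) • Measure.dirac j)
    (α0 : Fin (m + 1) → ℝ) (hα0 : ∀ j, 0 ≤ α0 j)
    (n0 : ℝ) (hn0 : n0 = ∑ j, α0 j)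
    (u : ℝ) :
    P {ω | (n : ℝ) * u + n0 * Real.log (b / (b - ∑ ℓ, f ℓ * p ℓ))
          ≤ ((n : ℝ) + n0) *
            Kinf (fun j => (α0 j + (Finset.univ.filter fun i => X i ω = j).card) / (n + n0))
              (∑ ℓ, f ℓ * p ℓ) f}
      ≤ ENNReal.ofReal (Real.exp 1 * (2 * n + 1) * Real.exp (-(n : ℝ) * u)) := by
  set μ := ∑ ℓ, f ℓ * p ℓ
  have hbμ : 0 < b - μ := sub_pos.2 hpf
  set d : Fin (m + 1) → ℝ := fun j => (f j - μ) / (b - μ)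
  have hd : ∀ j, d j ≤ 1 := fun j => (div_le_one hbμ).2 (by linarith [(hf j).2])
  have hN : 0 < (n : ℝ) + n0 :=
    add_pos_of_pos_of_nonneg (by exact_mod_cast hn) (hn0 ▸ Finset.sum_nonneg fun j _ => hα0 j)
  have hgrid : ∀ k ∈ Finset.range (2 * n + 1), (k : ℝ) / (2 * n) ∈ Icc (0 : ℝ) 1 :=
    fun k hk => ⟨by positivity, div_le_one_of_le₀ (by
      exact_mod_cast Nat.lt_succ_iff.1 (Finset.mem_range.1 hk)) (by positivity)⟩
  calc _ ≤ P (⋃ k ∈ Finset.range (2 * n + 1),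
          {ω | exp (n * u - 1) ≤ ∏ i, (1 - k / (2 * n) * d (X i ω))}) := by
        refine measure_mono fun ω hω => ?_
        obtain ⟨θ, hθ, hexp⟩ := exists_exp_le_prod_of_le_Kinf (X · ω)
          (Finset.sum_nonneg fun ℓ _ => mul_nonneg (hf ℓ).1 (hp.1 ℓ)) hpf hf hfm hα0 hn0 hN hω
        obtain ⟨k, hk, hprod⟩ := exists_grid_prod_le hn (fun i => hd (X i ω)) hθ
        refine Set.mem_biUnion (Finset.mem_range.2 (Nat.lt_succ_of_le hk)) ?_
        rw [Set.mem_ofPred_eq, exp_sub, div_le_iff₀' (exp_pos 1)]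
        exact hexp.trans hprod
    _ ≤ ∑ k ∈ Finset.range (2 * n + 1), ENNReal.ofReal (exp (-(n * u - 1))) :=
        (measure_biUnion_finset_le _ _).trans <| Finset.sum_le_sum fun k hk =>
          measure_exp_le_prod_le hXmeas hindep hdist hp.1
            (fun j => one_sub_mul_nonneg_of_mem_Icc (hgrid k hk) (hd j))
            (sum_mul_one_sub_mul_centered hp.2 b _) _
    _ = _ := by
        rw [Finset.sum_const, Finset.card_range, nsmul_eq_mul, ← ENNReal.ofReal_natCast,
          ← ENNReal.ofReal_mul (by positivity), neg_sub, sub_eq_add_neg, exp_add, neg_mul]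
        congr 1
        push_cast
        ring

/-- **Deviation bound for `Kinf` of the prior-shifted empirical distribution at the
true mean** (Lemma 8). `X_1, …, X_n` are i.i.d. samples from `p ∈ Δ_m`,
`ν_j = #{i : X_i = j}`, and `p̄_n(j) = (α⁰_j + ν_j)/(n + n₀)`. -/
theorem kinf_shifted_empirical_deviation
    (m : ℕ) (hm : 1 ≤ m) (b : ℝ) (hb : 0 < b)
    (f : Fin (m + 1) → ℝ) (hf : ∀ i, f i ∈ Set.Icc (0 : ℝ) b)
    (hf0 : f 0 = 0) (hfm : f (Fin.last m) = b)
    (n : ℕ) (hn : 1 ≤ n)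
    {Ω : Type*} [MeasurableSpace Ω] (P : Measure Ω) [IsProbabilityMeasure P]
    (X : Fin n → Ω → Fin (m + 1)) (hXmeas : ∀ i, Measurable (X i))
    (hindep : iIndepFun X P)
    (p : Fin (m + 1) → ℝ) (hp : p ∈ stdSimplex ℝ (Fin (m + 1)))
    (hpf : ∑ ℓ, f ℓ * p ℓ < b)
    (hdist : ∀ i, Measure.map (X i) P = ∑ j, ENNReal.ofReal (p j) • Measure.dirac j)
    (α0 : Fin (m + 1) → ℝ) (hα0 : ∀ j, 0 ≤ α0 j)
    (n0 : ℝ) (hn0 : n0 = ∑ j, α0 j)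
    (u : ℝ) (hu : 0 ≤ u) :
    P {ω | (n : ℝ) * u + n0 * Real.log (b / (b - ∑ ℓ, f ℓ * p ℓ))
          ≤ ((n : ℝ) + n0) *
            Kinf (fun j => (α0 j + (Finset.univ.filter fun i => X i ω = j).card) / (n + n0))
              (∑ ℓ, f ℓ * p ℓ) f}
      ≤ ENNReal.ofReal (Real.exp 1 * (2 * n + 1) * Real.exp (-(n : ℝ) * u)) :=
  kinf_shifted_empirical_deviation_general m b f hf hfm n hn P X hXmeas hindep p hp hpf hdist α0 hα0
    n0 hn0 u

end
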